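/- Let k be a field of characteristic p > 2 and let B be the quotient of the free algebra k⟨a,b⟩ by the ideal generated by a^p, b^p, and ba - ab - (1/2)a². Then B has dimension exactly p² over k, with basis {a^i b^j : 0 ≤ i, j ≤ p-1}. -/
import Mathlib


noncomputable section

variable (k : Type*) [Field k]

def aF : FreeAlgebra k (Fin 2) := FreeAlgebra.ι k 0

def bF : FreeAlgebra k (Fin 2) := FreeAlgebra.ι k 1

/-- The relations `a^p = 0`, `b^p = 0`, `ba - ab - (1/2)a² = 0`. -/
def relB (p : ℕ) : FreeAlgebra k (Fin 2) → FreeAlgebra k (Fin 2) → Prop :=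
  fun x y => y = 0 ∧
    (x = (aF k) ^ p ∨ x = (bF k) ^ p ∨
      x = bF k * aF k - aF k * bF k - ((2 : k)⁻¹) • (aF k) ^ 2)

/-- The algebra `B = k⟨a,b⟩/⟨a^p, b^p, ba - ab - (1/2)a²⟩`. -/
abbrev B (p : ℕ) := RingQuot (relB k p)

def aB (p : ℕ) : B k p := RingQuot.mkAlgHom k (relB k p) (aF k)

def bB (p : ℕ) : B k p := RingQuot.mkAlgHom k (relB k p) (bF k)


namespace DimAux

variable (p : ℕ)

abbrev V := Fin p × Fin p → k

def predFst (q : Fin p × Fin p) (h : 0 < (q.1 : ℕ)) : Fin p × Fin p :=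
  (⟨(q.1 : ℕ) - 1, lt_of_le_of_lt (Nat.sub_le _ _) q.1.isLt⟩, q.2)

def predSnd (q : Fin p × Fin p) (h : 0 < (q.2 : ℕ)) : Fin p × Fin p :=
  (q.1, ⟨(q.2 : ℕ) - 1, lt_of_le_of_lt (Nat.sub_le _ _) q.2.isLt⟩)

def A : V k p →ₗ[k] V k p where
  toFun f q := if h : 0 < (q.1 : ℕ) then f (predFst p q h) else 0
  map_add' f g := by funext q; by_cases h : 0 < (q.1 : ℕ) <;> simp [h]
  map_smul' c f := by funext q; by_cases h : 0 < (q.1 : ℕ) <;> simp [h]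

def Y : V k p →ₗ[k] V k p where
  toFun f q := if h : 0 < (q.2 : ℕ) then f (predSnd p q h) else 0
  map_add' f g := by funext q; by_cases h : 0 < (q.2 : ℕ) <;> simp [h]
  map_smul' c f := by funext q; by_cases h : 0 < (q.2 : ℕ) <;> simp [h]

def D : V k p →ₗ[k] V k p where
  toFun f q := if h : 0 < (q.1 : ℕ) then
      (((q.1 : ℕ) - 1 : ℕ) : k) * (2 : k)⁻¹ * f (predFst p q h) else 0
  map_add' f g := by funext q; by_cases h : 0 < (q.1 : ℕ) <;> simp [h, mul_add]
  map_smul' c f := by funext q; by_cases h : 0 < (q.1 : ℕ) <;> simp [h]; ring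

def Bop : V k p →ₗ[k] V k p := Y k p + D k p

lemma A_apply (f : V k p) (q) :
    A k p f q = if h : 0 < (q.1 : ℕ) then f (predFst p q h) else 0 := rfl

lemma Y_apply (f : V k p) (q) :
    Y k p f q = if h : 0 < (q.2 : ℕ) then f (predSnd p q h) else 0 := rfl

lemma D_apply (f : V k p) (q) :
    D k p f q = if h : 0 < (q.1 : ℕ) then
      (((q.1 : ℕ) - 1 : ℕ) : k) * (2 : k)⁻¹ * f (predFst p q h) else 0 := rfl

lemma A_pow_apply_zero (n : ℕ) (f : V k p) (q) (h : (q.1 : ℕ) < n) :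
    (A k p ^ n) f q = 0 := by
  induction n generalizing q with
  | zero => omega
  | succ n ih =>
    rw [pow_succ', Module.End.mul_apply, A_apply]
    split
    · exact ih _ (by simp [predFst]; omega)
    · rfl

lemma Y_pow_apply_zero (n : ℕ) (f : V k p) (q) (h : (q.2 : ℕ) < n) :
    (Y k p ^ n) f q = 0 := by
  induction n generalizing q with
  | zero => omega
  | succ n ih =>
    rw [pow_succ', Module.End.mul_apply, Y_apply]
    split
    · exact ih _ (by simp [predSnd]; omega)
    · rfl

lemma D_pow_apply_zero (n : ℕ) (f : V k p) (q) (h : (q.1 : ℕ) < n) :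
    (D k p ^ n) f q = 0 := by
  induction n generalizing q with
  | zero => omega
  | succ n ih =>
    rw [pow_succ', Module.End.mul_apply, D_apply]
    split
    · rw [ih _ (by simp [predFst]; omega), mul_zero]
    · rfl

lemma A_pow_p : A k p ^ p = 0 := by
  apply LinearMap.ext; intro f; funext q; exact A_pow_apply_zero k p p f q q.1.isLt

lemma commute_Y_D : Commute (Y k p) (D k p) := by
  apply LinearMap.ext; intro f; funext q
  rw [Module.End.mul_apply, Module.End.mul_apply, Y_apply, D_apply]
  by_cases h1 : 0 < (q.1 : ℕ) <;> by_cases h2 : 0 < (q.2 : ℕ) <;>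
    simp [h1, h2, Y_apply, D_apply, predFst, predSnd]

lemma Bop_pow_p [Fact p.Prime] [CharP k p] : Bop k p ^ p = 0 := by
  have hV : Nontrivial (V k p) := by
    have : 0 < p := (Fact.out : p.Prime).pos
    exact Pi.nontrivial
  have : CharP (Module.End k (V k p)) p :=
    charP_of_injective_ringHom (algebraMap k (Module.End k (V k p))).injective p
  rw [Bop, add_pow_char_of_commute _ (commute_Y_D k p)]
  have hY : Y k p ^ p = 0 := by
    apply LinearMap.ext; intro f; funext q; exact Y_pow_apply_zero k p p f q q.2.isLt
  have hD : D k p ^ p = 0 := by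
    apply LinearMap.ext; intro f; funext q; exact D_pow_apply_zero k p p f q q.1.isLt
  rw [hY, hD, add_zero]

lemma comm_rel : Bop k p * A k p = A k p * Bop k p + (2 : k)⁻¹ • (A k p * A k p) := by
  apply LinearMap.ext; intro f; funext q
  simp only [Module.End.mul_apply, LinearMap.add_apply, LinearMap.smul_apply, Pi.add_apply,
    Pi.smul_apply, Bop, A_apply, Y_apply, D_apply, smul_eq_mul, predFst, predSnd]
  by_cases h1 : 0 < (q.1 : ℕ)
  · by_cases h3 : 1 < (q.1 : ℕ)
    · have h3' : 0 < (q.1 : ℕ) - 1 := by omega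
      have hc : (((q.1 : ℕ) - 1 : ℕ) : k) = (((q.1 : ℕ) - 1 - 1 : ℕ) : k) + 1 := by
        have h : ((q.1 : ℕ) - 1 : ℕ) = ((q.1 : ℕ) - 1 - 1) + 1 := by omega
        rw [h]; push_cast; ring
      by_cases h2 : 0 < (q.2 : ℕ) <;>
        · simp [h1, h2, h3']
          ring
    · have h3' : (q.1 : ℕ) - 1 = 0 := by omega
      by_cases h2 : 0 < (q.2 : ℕ) <;> simp [h1, h2, h3']
  · by_cases h2 : 0 < (q.2 : ℕ) <;> simp [h1, h2]

end DimAux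

namespace DimAux2
open DimAux

variable (p : ℕ)

def φ : FreeAlgebra k (Fin 2) →ₐ[k] Module.End k (V k p) :=
  FreeAlgebra.lift k ![A k p, Bop k p]

lemma φ_aF : φ k p (aF k) = A k p := by
  simp [φ, aF, FreeAlgebra.lift_ι_apply]

lemma φ_bF : φ k p (bF k) = Bop k p := by
  simp [φ, bF, FreeAlgebra.lift_ι_apply]

variable [Fact p.Prime] [CharP k p]

lemma φ_rel : ∀ ⦃x y⦄, relB k p x y → φ k p x = φ k p y := by
  rintro x y ⟨rfl, hx | hx | hx⟩ <;> subst hx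
  · rw [map_pow, φ_aF, A_pow_p, map_zero]
  · rw [map_pow, φ_bF, Bop_pow_p, map_zero]
  · rw [map_zero, map_sub, map_sub, map_smul, map_mul, map_mul, map_pow, φ_aF, φ_bF,
      comm_rel, pow_two]
    abel

def ψ : B k p →ₐ[k] Module.End k (V k p) :=
  RingQuot.liftAlgHom k ⟨φ k p, φ_rel k p⟩

lemma ψ_aB : ψ k p (aB k p) = A k p := by
  rw [aB, ψ, RingQuot.liftAlgHom_mkAlgHom_apply, φ_aF]

lemma ψ_bB : ψ k p (bB k p) = Bop k p := by
  rw [bB, ψ, RingQuot.liftAlgHom_mkAlgHom_apply, φ_bF]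

lemma aB_pow_p : aB k p ^ p = 0 := by
  have h := RingQuot.mkAlgHom_rel k (s := relB k p) (x := aF k ^ p) (y := 0) ⟨rfl, Or.inl rfl⟩
  rw [map_pow, map_zero] at h
  exact h

lemma bB_pow_p : bB k p ^ p = 0 := by
  have h := RingQuot.mkAlgHom_rel k (s := relB k p) (x := bF k ^ p) (y := 0)
    ⟨rfl, Or.inr (Or.inl rfl)⟩
  rw [map_pow, map_zero] at h
  exact h

lemma bB_aB : bB k p * aB k p = aB k p * bB k p + (2 : k)⁻¹ • (aB k p ^ 2) := by
  have h := RingQuot.mkAlgHom_rel k (s := relB k p)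
    (x := bF k * aF k - aF k * bF k - ((2 : k)⁻¹) • (aF k) ^ 2) (y := 0)
    ⟨rfl, Or.inr (Or.inr rfl)⟩
  rw [map_zero, map_sub, map_sub, map_smul, map_mul, map_mul, map_pow, sub_sub,
    sub_eq_zero] at h
  simp only [aB, bB]
  exact h

lemma bB_aB_pow (i : ℕ) :
    bB k p * aB k p ^ i = aB k p ^ i * bB k p + ((i : k) * (2 : k)⁻¹) • aB k p ^ (i + 1) := by
  induction i with
  | zero => simp
  | succ i ih =>
    have key : bB k p * aB k p = aB k p * bB k p + (2 : k)⁻¹ • aB k p ^ 2 := bB_aB k p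
    have h1 : bB k p * aB k p ^ (i + 1) = (bB k p * aB k p ^ i) * aB k p := by
      rw [pow_succ, mul_assoc]
    rw [h1, ih, add_mul, smul_mul_assoc, mul_assoc, key, mul_add, ← mul_assoc, ← pow_succ,
      ← pow_succ, mul_smul_comm]
    have h2 : aB k p ^ i * aB k p ^ 2 = aB k p ^ (i + 1 + 1) := by rw [← pow_add]
    rw [h2]
    push_cast
    rw [add_mul, one_mul, add_smul]
    abel

def S : Submodule k (B k p) :=
  Submodule.span k
    {x : B k p | ∃ i j : ℕ, i ≤ p - 1 ∧ j ≤ p - 1 ∧ x = (aB k p) ^ i * (bB k p) ^ j}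

lemma mem_S (i j : ℕ) : aB k p ^ i * bB k p ^ j ∈ S k p := by
  have hp : 0 < p := (Fact.out : p.Prime).pos
  by_cases hi : i ≤ p - 1
  · by_cases hj : j ≤ p - 1
    · exact Submodule.subset_span ⟨i, j, hi, hj, rfl⟩
    · have hz : bB k p ^ j = 0 := by
        have hpj : p ≤ j := by omega
        calc bB k p ^ j = bB k p ^ p * bB k p ^ (j - p) := by rw [← pow_add]; congr 1; omega
        _ = 0 := by rw [bB_pow_p, zero_mul]
      rw [hz, mul_zero]; exact zero_mem _
  · have hz : aB k p ^ i = 0 := by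
      have hpi : p ≤ i := by omega
      calc aB k p ^ i = aB k p ^ p * aB k p ^ (i - p) := by rw [← pow_add]; congr 1; omega
      _ = 0 := by rw [aB_pow_p, zero_mul]
    rw [hz, zero_mul]; exact zero_mem _

lemma aB_mul_mem (i j : ℕ) : aB k p * (aB k p ^ i * bB k p ^ j) ∈ S k p := by
  rw [← mul_assoc, ← pow_succ']
  exact mem_S k p _ _

lemma bB_mul_mem (i j : ℕ) : bB k p * (aB k p ^ i * bB k p ^ j) ∈ S k p := by
  rw [← mul_assoc, bB_aB_pow, add_mul, smul_mul_assoc]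
  refine add_mem ?_ (Submodule.smul_mem _ _ (mem_S k p _ _))
  rw [mul_assoc, ← pow_succ']
  exact mem_S k p _ _

lemma mul_span (y : B k p) (h : ∀ i j : ℕ, y * (aB k p ^ i * bB k p ^ j) ∈ S k p) :
    ∀ s ∈ S k p, y * s ∈ S k p := by
  intro s hs
  refine Submodule.span_induction ?_ ?_ ?_ ?_ hs
  · rintro x ⟨i, j, -, -, rfl⟩; exact h i j
  · simp
  · intro x z _ _ hx hz; rw [mul_add]; exact add_mem hx hz
  · intro c x _ hx; rw [mul_smul_comm]; exact Submodule.smul_mem _ _ hx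

lemma mul_mem_S (y : B k p) : ∀ s ∈ S k p, y * s ∈ S k p := by
  obtain ⟨x, rfl⟩ := RingQuot.mkAlgHom_surjective k (relB k p) y
  induction x using FreeAlgebra.induction with
  | grade0 r =>
    intro s hs
    rw [AlgHom.commutes, ← Algebra.smul_def]
    exact Submodule.smul_mem _ r hs
  | grade1 x =>
    fin_cases x
    · exact mul_span k p _ (fun i j => aB_mul_mem k p i j)
    · exact mul_span k p _ (fun i j => bB_mul_mem k p i j)
  | mul x y ihx ihy =>
    intro s hs
    rw [map_mul, mul_assoc]
    exact ihx _ (ihy s hs)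
  | add x y ihx ihy =>
    intro s hs
    rw [map_add, add_mul]
    exact add_mem (ihx s hs) (ihy s hs)

lemma S_top : S k p = ⊤ := by
  rw [eq_top_iff]
  rintro y -
  have h1 : (1 : B k p) ∈ S k p := by simpa using mem_S k p 0 0
  simpa using mul_mem_S k p y 1 h1

def e (i j : ℕ) : V k p := fun q => if (q.1 : ℕ) = i ∧ (q.2 : ℕ) = j then 1 else 0

lemma A_e (i j : ℕ) : A k p (e k p i j) = e k p (i + 1) j := by
  funext q
  rw [A_apply]
  simp only [e, predFst]
  split
  next h =>
    have hiff : (((q.1 : ℕ) - 1 = i) ∧ (q.2 : ℕ) = j) ↔ ((q.1 : ℕ) = i + 1 ∧ (q.2 : ℕ) = j) := by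
      omega
    simp [hiff]
  next h =>
    have hn : ¬((q.1 : ℕ) = i + 1 ∧ (q.2 : ℕ) = j) := by omega
    simp [hn]

lemma Y_e (i j : ℕ) : Y k p (e k p i j) = e k p i (j + 1) := by
  funext q
  rw [Y_apply]
  simp only [e, predSnd]
  split
  next h =>
    have hiff : ((q.1 : ℕ) = i ∧ ((q.2 : ℕ) - 1 = j)) ↔ ((q.1 : ℕ) = i ∧ (q.2 : ℕ) = j + 1) := by
      omega
    simp [hiff]
  next h =>
    have hn : ¬((q.1 : ℕ) = i ∧ (q.2 : ℕ) = j + 1) := by omega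
    simp [hn]

lemma D_e0 (j : ℕ) : D k p (e k p 0 j) = 0 := by
  funext q
  rw [D_apply]
  simp only [e, predFst]
  split
  next h =>
    by_cases hq : ((q.1 : ℕ) - 1 = 0 ∧ (q.2 : ℕ) = j)
    · have h1 : ((q.1 : ℕ) - 1 : ℕ) = 0 := hq.1
      simp [hq, h1]
    · simp [hq]
  next => rfl

lemma Bop_e0 (j : ℕ) : Bop k p (e k p 0 j) = e k p 0 (j + 1) := by
  rw [Bop, LinearMap.add_apply, Y_e, D_e0, add_zero]

lemma Bop_pow_e (j : ℕ) : (Bop k p ^ j) (e k p 0 0) = e k p 0 j := by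
  induction j with
  | zero => rfl
  | succ j ih => rw [pow_succ', Module.End.mul_apply, ih, Bop_e0]

lemma A_pow_e (i j : ℕ) : (A k p ^ i) (e k p 0 j) = e k p i j := by
  induction i with
  | zero => rfl
  | succ i ih => rw [pow_succ', Module.End.mul_apply, ih, A_e]

lemma psi_apply_e (i j : ℕ) :
    ψ k p (aB k p ^ i * bB k p ^ j) (e k p 0 0) = e k p i j := by
  rw [map_mul, map_pow, map_pow, ψ_aB, ψ_bB, Module.End.mul_apply, Bop_pow_e, A_pow_e]

lemma indep :
    LinearIndependent k
      (fun ij : Fin p × Fin p => (aB k p) ^ (ij.1 : ℕ) * (bB k p) ^ (ij.2 : ℕ)) := by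
  apply LinearIndependent.of_comp ((LinearMap.applyₗ (e k p 0 0)).comp (ψ k p).toLinearMap)
  have hcomp : (((LinearMap.applyₗ (e k p 0 0)).comp (ψ k p).toLinearMap) ∘
      fun ij : Fin p × Fin p => (aB k p) ^ (ij.1 : ℕ) * (bB k p) ^ (ij.2 : ℕ)) =
      fun ij : Fin p × Fin p => Pi.single ij (1 : k) := by
    funext ij
    have h1 : (((LinearMap.applyₗ (e k p 0 0)).comp (ψ k p).toLinearMap))
        ((aB k p) ^ (ij.1 : ℕ) * (bB k p) ^ (ij.2 : ℕ)) = e k p (ij.1 : ℕ) (ij.2 : ℕ) := by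
      simp only [LinearMap.comp_apply, AlgHom.toLinearMap_apply, LinearMap.applyₗ_apply_apply]
      exact psi_apply_e k p _ _
    simp only [Function.comp_apply]
    rw [h1]
    funext q
    have hiff : ((q.1 : ℕ) = (ij.1 : ℕ) ∧ (q.2 : ℕ) = (ij.2 : ℕ)) ↔ q = ij := by
      rw [Prod.ext_iff, Fin.ext_iff, Fin.ext_iff]
    by_cases h : q = ij
    · simp [e, Pi.single_apply, hiff, h]
    · simp [e, Pi.single_apply, hiff, h]
  rw [hcomp]
  have hb : ⇑(Pi.basisFun k (Fin p × Fin p)) = fun ij : Fin p × Fin p => Pi.single ij (1 : k) :=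
    funext fun i => Pi.basisFun_apply k _ i
  rw [← hb]
  exact (Pi.basisFun k (Fin p × Fin p)).linearIndependent

end DimAux2

theorem dim_eq_p_squared (p : ℕ) [Fact p.Prime] (hp : 2 < p) [CharP k p] :
    Module.finrank k (B k p) = p ^ 2 ∧
    LinearIndependent k
      (fun ij : Fin p × Fin p => (aB k p) ^ (ij.1 : ℕ) * (bB k p) ^ (ij.2 : ℕ)) ∧
    Submodule.span k
      {x : B k p | ∃ i j : ℕ, i ≤ p - 1 ∧ j ≤ p - 1 ∧ x = (aB k p) ^ i * (bB k p) ^ j} = ⊤ := by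
  refine ⟨?_, DimAux2.indep k p, DimAux2.S_top k p⟩
  have hspan : ⊤ ≤ Submodule.span k (Set.range
      (fun ij : Fin p × Fin p => (aB k p) ^ (ij.1 : ℕ) * (bB k p) ^ (ij.2 : ℕ))) := by
    rw [← DimAux2.S_top k p, DimAux2.S]
    refine Submodule.span_le.2 ?_
    rintro x ⟨i, j, hi, hj, rfl⟩
    have hpos := (Fact.out : p.Prime).pos
    have hip : i < p := by omega
    have hjp : j < p := by omega
    exact Submodule.subset_span ⟨(⟨i, hip⟩, ⟨j, hjp⟩), rfl⟩
  let b := Module.Basis.mk (DimAux2.indep k p) hspan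
  rw [Module.finrank_eq_card_basis b, Fintype.card_prod, Fintype.card_fin, sq]
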